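/- arXiv:math/0205169 — 2 statements merged into one kernel-verified Lean document; each statement's English description precedes it below -/
import Mathlib

section
/- Let f : T² → T² be the expanding endomorphism of T² = ℝ²/ℤ² induced by the integer matrix A with rows (6,3) and (3,3). There exists a constant C > 0 such that for every x ∈ T² and every r ∈ (0,1), τ(B(x,r)) ≤ (2/log 9)·log(1/r) + C. In particular τ(B(x,r)) is finite for all x and all r ∈ (0,1). -/
open MeasureTheory Filter Metric Set
open scoped NNReal ENNReal ENat Topology

noncomputable section

/-- The first return time (Poincaré recurrence) of a set `A` under a map `f`:
`τ(A) = min {k > 0 : f^k(A) ∩ A ≠ ∅}`, with value `⊤ = ∞` if no such `k` exists. -/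
def tau {X : Type*} (f : X → X) (A : Set X) : ℕ∞ :=
  ⨅ (k : ℕ) (_ : 0 < k ∧ ((f^[k]) '' A ∩ A).Nonempty), (k : ℕ∞)

/-- The integer lattice ℤ^d inside Euclidean space ℝ^d. -/
def intLattice (d : ℕ) : AddSubgroup (EuclideanSpace ℝ (Fin d)) where
  carrier := {x | ∀ i, ∃ m : ℤ, x i = (m : ℝ)}
  zero_mem' := fun i => ⟨0, by simp⟩
  add_mem' := by
    rintro a b ha hb i
    obtain ⟨m, hm⟩ := ha i
    obtain ⟨n, hn⟩ := hb i
    exact ⟨m + n, by push_cast [PiLp.add_apply, hm, hn]; ring⟩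
  neg_mem' := by
    rintro a ha i
    obtain ⟨m, hm⟩ := ha i
    exact ⟨-m, by push_cast [PiLp.neg_apply, hm]; ring⟩

instance intLattice_isClosed (d : ℕ) :
    IsClosed ((intLattice d : AddSubgroup (EuclideanSpace ℝ (Fin d))) :
      Set (EuclideanSpace ℝ (Fin d))) := by
  have h1 : ((intLattice d : AddSubgroup (EuclideanSpace ℝ (Fin d))) :
        Set (EuclideanSpace ℝ (Fin d)))
      = ⋂ i, (fun x : EuclideanSpace ℝ (Fin d) => x i) ⁻¹' (Set.range ((↑) : ℤ → ℝ)) := by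
    ext x
    simp [intLattice, AddSubgroup.mem_carrier, eq_comm]
  rw [h1]
  refine isClosed_iInter fun i => IsClosed.preimage ?_ ?_
  · exact (EuclideanSpace.proj i : EuclideanSpace ℝ (Fin d) →L[ℝ] ℝ).continuous
  · exact Int.isClosedEmbedding_coe_real.isClosed_range

/-- The d-dimensional torus ℝ^d/ℤ^d.  As a quotient of the Euclidean space ℝ^d by the
(closed) subgroup ℤ^d it carries the quotient metric
`d(x,y) = inf_{m ∈ ℤ^d} ‖x' - y' - m‖` induced by the Euclidean norm. -/
abbrev Torus (d : ℕ) := EuclideanSpace ℝ (Fin d) ⧸ intLattice d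

/-- A real d×d matrix seen as a continuous linear map on Euclidean space ℝ^d. -/
def matCLM {d : ℕ} (A : Matrix (Fin d) (Fin d) ℝ) :
    EuclideanSpace ℝ (Fin d) →L[ℝ] EuclideanSpace ℝ (Fin d) :=
  LinearMap.toContinuousLinearMap (Matrix.toEuclideanLin A)

theorem intLattice_mapsTo {d : ℕ} (A : Matrix (Fin d) (Fin d) ℤ) :
    intLattice d ≤ (intLattice d).comap
      ((matCLM (A.map (Int.cast : ℤ → ℝ))).toLinearMap.toAddMonoidHom) := by
  intro x hx
  choose m hm using hx
  intro i
  refine ⟨∑ j, A i j * m j, ?_⟩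
  have hx' : (matCLM (A.map (Int.cast : ℤ → ℝ))) x i
      = ∑ j, (A i j : ℝ) * x j := by
    simp [matCLM, Matrix.toEuclideanLin, Matrix.mulVec, dotProduct]
  show (matCLM (A.map (Int.cast : ℤ → ℝ))) x i = _
  rw [hx']
  push_cast
  exact Finset.sum_congr rfl fun j _ => by rw [hm j]

/-- The endomorphism of the torus T^d induced by an integer matrix A, i.e. x ↦ Ax (mod ℤ^d). -/
def toralMap {d : ℕ} (A : Matrix (Fin d) (Fin d) ℤ) : Torus d → Torus d :=
  QuotientAddGroup.map (intLattice d) (intLattice d)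
    ((matCLM (A.map (Int.cast : ℤ → ℝ))).toLinearMap.toAddMonoidHom)
    (intLattice_mapsTo A)

/-- Haar (Lebesgue) probability measure on the torus T^d: the pushforward under the quotient
map of Lebesgue measure restricted to the fundamental domain [0,1)^d. -/
def torusMeasure (d : ℕ) : Measure (Torus d) :=
  Measure.map (QuotientAddGroup.mk)
    (volume.restrict {x : EuclideanSpace ℝ (Fin d) | ∀ i, x i ∈ Set.Ico (0:ℝ) 1})

/-- The matrix A with rows (6,3) and (3,3). -/
def A63 : Matrix (Fin 2) (Fin 2) ℤ := !![6,3;3,3]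

/-!
Write `A = 3B` with `B = [[2,1],[1,1]] ∈ GL₂(ℤ)`. Since `B⁻¹` preserves `ℤ²`, the `f^k`-preimages
of a point `x` are the translate `3⁻ᵏ (B⁻ᵏ x + ℤ²)` of a lattice of mesh `3⁻ᵏ`, so one of them lies
within `3⁻ᵏ √2 / 2 < r` of `x` as soon as `3ᵏ ≥ 1/r`. Hence `x ∈ f^k(B(x,r)) ∩ B(x,r)` for
`k = ⌈log₃ (1/r)⌉ < (2 / log 9) log (1/r) + 1`.
-/

open WithLp

section ToralEndomorphism

variable {d : ℕ}

def intMatCLM (d : ℕ) :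
    Matrix (Fin d) (Fin d) ℤ →+* (EuclideanSpace ℝ (Fin d) →L[ℝ] EuclideanSpace ℝ (Fin d)) :=
  (Matrix.toEuclideanCLM (n := Fin d) (𝕜 := ℝ) : Matrix (Fin d) (Fin d) ℝ →+* _).comp
    (Int.castRingHom ℝ).mapMatrix

lemma intMatCLM_zsmul (m : ℤ) (M : Matrix (Fin d) (Fin d) ℤ) :
    intMatCLM d (m • M) = (m : ℝ) • intMatCLM d M := by
  rw [map_zsmul]
  ext v i
  simp

lemma toralMap_iterate_mk (A : Matrix (Fin d) (Fin d) ℤ) (k : ℕ) (v : EuclideanSpace ℝ (Fin d)) :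
    (toralMap A)^[k] (v : Torus d) = (intMatCLM d (A ^ k) v : Torus d) := by
  have hsemi : Function.Semiconj (QuotientAddGroup.mk : _ → Torus d)
      (intMatCLM d A) (toralMap A) := fun _ => rfl
  rw [← hsemi.iterate_right k v, map_pow, FunLike.coe_pow_eq_iterate]

lemma toLp_intCast_mem_intLattice (n : Fin d → ℤ) :
    toLp 2 (fun i => (n i : ℝ)) ∈ intLattice d :=
  fun i => ⟨n i, rfl⟩

lemma exists_mem_intLattice_norm_sub_le (z : EuclideanSpace ℝ (Fin d)) :
    ∃ n ∈ intLattice d, ‖z - n‖ ≤ √d / 2 := by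
  refine ⟨toLp 2 fun i => (round (z i) : ℝ), toLp_intCast_mem_intLattice _, ?_⟩
  have hd : √d / 2 = √(∑ _ : Fin d, (1 / 2 : ℝ) ^ 2) := by
    rw [Finset.sum_const, Finset.card_univ, Fintype.card_fin, nsmul_eq_mul,
      Real.sqrt_mul (Nat.cast_nonneg d), Real.sqrt_sq (by norm_num)]
    ring
  rw [EuclideanSpace.norm_eq, hd]
  gcongr with i
  simpa using abs_sub_round (z i)

lemma exists_smul_intMatCLM_sub_mem_intLattice (U : (Matrix (Fin d) (Fin d) ℤ)ˣ) {s : ℝ}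
    (hs : s ≠ 0) (x : EuclideanSpace ℝ (Fin d)) :
    ∃ w, (s • intMatCLM d U) w - x ∈ intLattice d ∧ ‖w - x‖ ≤ √d / 2 / |s| := by
  set y := intMatCLM d ↑U⁻¹ x
  obtain ⟨n, hn, hnear⟩ := exists_mem_intLattice_norm_sub_le (s • x - y)
  refine ⟨s⁻¹ • (y + n), ?_, ?_⟩
  · have hUy : intMatCLM d U y = x := by
      change (intMatCLM d U * intMatCLM d ↑U⁻¹) x = x
      rw [← map_mul, Units.mul_inv, map_one]
      rfl
    have himage : (s • intMatCLM d U) (s⁻¹ • (y + n)) = x + intMatCLM d U n := by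
      rw [smul_apply, map_smul, smul_smul, mul_inv_cancel₀ hs, one_smul, map_add, hUy]
    rw [himage, add_sub_cancel_left]
    exact intLattice_mapsTo _ hn
  · calc ‖s⁻¹ • (y + n) - x‖ = |s|⁻¹ * ‖s • x - y - n‖ := by
          rw [← norm_neg, ← abs_inv, ← Real.norm_eq_abs, ← norm_smul, smul_sub, smul_sub,
            smul_smul, inv_mul_cancel₀ hs, one_smul, smul_add, neg_sub]
          abel_nf
      _ ≤ |s|⁻¹ * (√d / 2) := by gcongr
      _ = √d / 2 / |s| := by ring

lemma exists_toralMap_iterate_eq_dist_le (m : ℤ) (hm : m ≠ 0)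
    (U : (Matrix (Fin d) (Fin d) ℤ)ˣ) (k : ℕ) (x : Torus d) :
    ∃ y, (toralMap (m • (U : Matrix (Fin d) (Fin d) ℤ)))^[k] y = x ∧
      dist y x ≤ √d / 2 / |(m : ℝ)| ^ k := by
  obtain ⟨x, rfl⟩ := QuotientAddGroup.mk_surjective x
  obtain ⟨w, hw, hwx⟩ := exists_smul_intMatCLM_sub_mem_intLattice (U ^ k)
    (pow_ne_zero k (Int.cast_ne_zero.2 hm)) x
  refine ⟨w, ?_, ?_⟩
  · rw [toralMap_iterate_mk, smul_pow, intMatCLM_zsmul, Int.cast_pow, ← Units.val_pow_eq_pow_val]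
    exact QuotientAddGroup.eq_iff_sub_mem.2 hw
  · calc dist (w : Torus d) x ≤ ‖w - x‖ := by
          rw [dist_eq_norm, ← QuotientAddGroup.mk_sub]
          exact QuotientAddGroup.norm_mk_le_norm
      _ ≤ √d / 2 / |(m : ℝ)| ^ k := by rwa [← abs_pow]

end ToralEndomorphism

lemma tau_le_of_iterate_mem {X : Type*} {f : X → X} {A : Set X} {k : ℕ} (hk : 0 < k) {y : X}
    (hy : y ∈ A) (hfy : f^[k] y ∈ A) : tau f A ≤ k :=
  iInf₂_le_of_le k ⟨hk, f^[k] y, mem_image_of_mem _ hy, hfy⟩ le_rfl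

lemma exists_pos_inv_pow_le_lt_logb_add_one {b r : ℝ} (hb : 1 < b) (hr : 0 < r) (hr1 : r < 1) :
    ∃ k : ℕ, 0 < k ∧ (b ^ k)⁻¹ ≤ r ∧ (k : ℝ) < Real.logb b (1 / r) + 1 := by
  have hlog : 0 < Real.logb b (1 / r) := Real.logb_pos hb ((one_lt_div hr).2 hr1)
  refine ⟨⌈Real.logb b (1 / r)⌉₊, Nat.ceil_pos.2 hlog, ?_, Nat.ceil_lt_add_one hlog.le⟩
  rw [inv_le_comm₀ (by positivity) hr, ← one_div, ← Real.rpow_natCast,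
    ← Real.logb_le_iff_le_rpow hb (by positivity)]
  exact Nat.le_ceil _

def catMap : (Matrix (Fin 2) (Fin 2) ℤ)ˣ where
  val := !![2, 1; 1, 1]
  inv := !![1, -1; -1, 2]
  val_inv := by simp [Matrix.one_fin_two]
  inv_val := by simp [Matrix.one_fin_two]

lemma A63_eq_smul_catMap : A63 = (3 : ℤ) • (catMap : Matrix (Fin 2) (Fin 2) ℤ) := by
  ext i j
  fin_cases i <;> fin_cases j <;> rfl

/-- For the expanding toral endomorphism of T² induced by `A = [[6,3],[3,3]]` there is a
constant C > 0 such that for every x ∈ T² and every radius r ∈ (0,1),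
`τ(B(x,r)) ≤ (2/log 9)·log(1/r) + C`; in particular `τ(B(x,r))` is finite. -/
theorem statement3 :
    ∃ C : ℝ, 0 < C ∧ ∀ (x : Torus 2) (r : ℝ), 0 < r → r < 1 →
      (tau (toralMap A63) (ball x r) : ℝ≥0∞)
          ≤ ENNReal.ofReal (2 / Real.log 9 * Real.log (1 / r) + C)
        ∧ tau (toralMap A63) (ball x r) ≠ ⊤ := by
  refine ⟨1, one_pos, fun x r hr hr1 => ?_⟩
  obtain ⟨k, hk, hkr, hklog⟩ :=
    exists_pos_inv_pow_le_lt_logb_add_one (by norm_num : (1 : ℝ) < 3) hr hr1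
  obtain ⟨y, hyx, hdist⟩ := exists_toralMap_iterate_eq_dist_le 3 three_ne_zero catMap k x
  have hy : y ∈ ball x r := by
    have hsqrt : √2 / 2 < 1 := by
      rw [div_lt_one two_pos, Real.sqrt_lt' two_pos]
      norm_num
    calc dist y x ≤ √2 / 2 / 3 ^ k := by simpa using hdist
      _ < 1 / 3 ^ k := by gcongr
      _ ≤ r := by rwa [one_div]
  have htau : tau (toralMap A63) (ball x r) ≤ k :=
    tau_le_of_iterate_mem hk hy (by rw [A63_eq_smul_catMap, hyx]; exact mem_ball_self hr)
  have hlog9 : 2 / Real.log 9 * Real.log (1 / r) = Real.logb 3 (1 / r) := by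
    rw [show (9 : ℝ) = 3 ^ 2 by norm_num, Real.log_pow, Real.logb]
    field_simp
    push_cast
    ring
  refine ⟨?_, ne_top_of_le_ne_top (ENat.natCast_ne_top k) htau⟩
  calc (tau (toralMap A63) (ball x r) : ℝ≥0∞) ≤ (k : ℝ≥0∞) := by
        exact_mod_cast ENat.toENNReal_le.2 htau
    _ = ENNReal.ofReal k := (ENNReal.ofReal_natCast k).symm
    _ ≤ _ := ENNReal.ofReal_le_ofReal (by rw [hlog9]; exact hklog.le)

end
end

section
/- (Closing lemma for expanding linear torus endomorphisms.) Let A be a d×d integer matrix that is invertible over ℝ and satisfies ‖A^{-1}‖ < 1 for the operator norm, let f = f_A : T^d → T^d be the induced map, and set c := 1 − ‖A^{-1}‖ ∈ (0,1). Then for every z ∈ T^d, every integer p ≥ 1 and every r > 0, if d(z, f^p z) < r then there exists a periodic point y ∈ T^d with f^p y = y and d(y,z) < r/c. -/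
open MeasureTheory Filter Metric Set
open scoped NNReal ENNReal ENat Topology

noncomputable section

/-! Lift `z` to `x ∈ ℝ^d` and pick `m ∈ ℤ^d` with `‖A^p x - x - m‖ < r`. Since `A⁻¹`
is a contraction with constant `1 - c`, so is `w ↦ A^{-p} (w + m)`; its fixed point `y` satisfies
`A^p y = y + m`, hence projects to a `p`-periodic point, and the a priori estimate of the
Banach fixed point theorem gives
`‖x - y‖ ≤ ‖x - A^{-p}(x + m)‖ / c ≤ ‖A^p x - x - m‖ / c < r / c`. -/

section ExpandingEquiv

variable {𝕜 E : Type*} [NontriviallyNormedField 𝕜] [NormedAddCommGroup E] [NormedSpace 𝕜 E]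

theorem ContinuousLinearEquiv.lipschitzWith_iterate_symm (L : E ≃L[𝕜] E)
    (hL : ‖(L.symm : E →L[𝕜] E)‖ < 1) {p : ℕ} (hp : 1 ≤ p) :
    LipschitzWith ‖(L.symm : E →L[𝕜] E)‖₊ L.symm^[p] :=
  ((L.symm : E →L[𝕜] E).lipschitz.iterate p).weaken
    (pow_le_of_le_one zero_le (NNReal.coe_le_coe.1 hL.le) (by omega))

theorem ContinuousLinearEquiv.contractingWith_iterate_symm_add (L : E ≃L[𝕜] E)
    (hL : ‖(L.symm : E →L[𝕜] E)‖ < 1) {p : ℕ} (hp : 1 ≤ p) (m : E) :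
    ContractingWith ‖(L.symm : E →L[𝕜] E)‖₊ fun w => L.symm^[p] (w + m) :=
  ⟨NNReal.coe_lt_coe.1 hL, fun w₁ w₂ => by
    simpa only [edist_add_right] using L.lipschitzWith_iterate_symm hL hp (w₁ + m) (w₂ + m)⟩

theorem ContinuousLinearEquiv.exists_iterate_eq_add_dist_le [CompleteSpace E] (L : E ≃L[𝕜] E)
    (hL : ‖(L.symm : E →L[𝕜] E)‖ < 1) {p : ℕ} (hp : 1 ≤ p) (x m : E) :
    ∃ y, L^[p] y = y + m ∧
      dist x y ≤ dist (x + m) (L^[p] x) / (1 - ‖(L.symm : E →L[𝕜] E)‖) := by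
  have hT := L.contractingWith_iterate_symm_add hL hp m
  have hleft : Function.LeftInverse L.symm^[p] L^[p] :=
    Function.LeftInverse.iterate L.symm_apply_apply p
  have hright : Function.RightInverse L.symm^[p] L^[p] :=
    Function.RightInverse.iterate L.apply_symm_apply p
  have hlip : LipschitzWith 1 L.symm^[p] := (L.lipschitzWith_iterate_symm hL hp).weaken hT.1.le
  refine ⟨ContractingWith.fixedPoint _ hT, ?_, ?_⟩
  · conv_lhs => rw [← hT.fixedPoint_isFixedPt]
    exact hright _
  · have hstep : dist x (L.symm^[p] (x + m)) ≤ dist (x + m) (L^[p] x) := by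
      calc dist x (L.symm^[p] (x + m))
          = dist (L.symm^[p] (L^[p] x)) (L.symm^[p] (x + m)) := by rw [hleft]
        _ ≤ dist (L^[p] x) (x + m) := by simpa using hlip.dist_le_mul (L^[p] x) (x + m)
        _ = dist (x + m) (L^[p] x) := dist_comm _ _
    calc dist x (ContractingWith.fixedPoint _ hT)
        ≤ dist x (L.symm^[p] (x + m)) / (1 - ‖(L.symm : E →L[𝕜] E)‖) :=
          hT.dist_fixedPoint_le x
      _ ≤ dist (x + m) (L^[p] x) / (1 - ‖(L.symm : E →L[𝕜] E)‖) := by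
          gcongr

end ExpandingEquiv

theorem QuotientAddGroup.exists_mem_dist_add_lt {M : Type*} [SeminormedAddCommGroup M]
    {S : AddSubgroup M} {x y : M} {r : ℝ} (h : dist (x : M ⧸ S) y < r) :
    ∃ m ∈ S, dist (x + m) y < r := by
  rw [dist_eq_norm, ← QuotientAddGroup.mk_sub, QuotientAddGroup.norm_lt_iff] at h
  obtain ⟨w, hw, hwr⟩ := h
  refine ⟨_, S.neg_mem (QuotientAddGroup.eq.1 hw), ?_⟩
  rwa [dist_eq_norm, show x + -(-w + (x - y)) - y = w by abel]

theorem QuotientAddGroup.dist_mk_le {M : Type*} [SeminormedAddCommGroup M]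
    {S : AddSubgroup M} (x y : M) : dist (x : M ⧸ S) y ≤ dist x y := by
  simpa only [dist_eq_norm, ← QuotientAddGroup.mk_sub] using QuotientAddGroup.norm_mk_le_norm

theorem matCLM_mul_apply {d : ℕ} (M N : Matrix (Fin d) (Fin d) ℝ)
    (x : EuclideanSpace ℝ (Fin d)) : matCLM (M * N) x = matCLM M (matCLM N x) := by
  simp [matCLM, Matrix.toEuclideanLin]

theorem matCLM_one_apply {d : ℕ} (x : EuclideanSpace ℝ (Fin d)) : matCLM 1 x = x := by
  simp [matCLM, Matrix.toEuclideanLin]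

def matCLMEquiv {d : ℕ} (M : Matrix (Fin d) (Fin d) ℝ) (hM : M.det ≠ 0) :
    EuclideanSpace ℝ (Fin d) ≃L[ℝ] EuclideanSpace ℝ (Fin d) :=
  ContinuousLinearEquiv.equivOfInverse (matCLM M) (matCLM M⁻¹)
    (fun x => by rw [← matCLM_mul_apply, M.nonsing_inv_mul (isUnit_iff_ne_zero.2 hM),
      matCLM_one_apply])
    (fun x => by rw [← matCLM_mul_apply, M.mul_nonsing_inv (isUnit_iff_ne_zero.2 hM),
      matCLM_one_apply])

theorem iterate_toralMap_mk {d : ℕ} (A : Matrix (Fin d) (Fin d) ℤ) (n : ℕ)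
    (x : EuclideanSpace ℝ (Fin d)) :
    (toralMap A)^[n] (x : Torus d) = ((matCLM (A.map (Int.cast : ℤ → ℝ)))^[n] x : Torus d) :=
  ((Function.Semiconj.iterate_right (f := QuotientAddGroup.mk) (fun _ => rfl) n) x).symm

theorem statement4_general (d : ℕ) (A : Matrix (Fin d) (Fin d) ℤ)
    (hdet : (A.map (Int.cast : ℤ → ℝ)).det ≠ 0)
    (hnorm : ‖matCLM ((A.map (Int.cast : ℤ → ℝ))⁻¹)‖ < 1)
    (c : ℝ) (hc : c = 1 - ‖matCLM ((A.map (Int.cast : ℤ → ℝ))⁻¹)‖)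
    (z : Torus d) (p : ℕ) (hp : 1 ≤ p) (r : ℝ)
    (hclose : dist z ((toralMap A)^[p] z) < r) :
    ∃ y : Torus d, (toralMap A)^[p] y = y ∧ dist y z < r / c := by
  set L := matCLMEquiv (A.map (Int.cast : ℤ → ℝ)) hdet
  obtain ⟨x, rfl⟩ := QuotientAddGroup.mk_surjective z
  rw [iterate_toralMap_mk] at hclose
  obtain ⟨m, hm, hxm⟩ := QuotientAddGroup.exists_mem_dist_add_lt hclose
  obtain ⟨y, hy, hxy⟩ := L.exists_iterate_eq_add_dist_le hnorm hp x m
  have hc_pos : 0 < c := by rw [hc]; linarith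
  refine ⟨y, ?_, ?_⟩
  · rw [iterate_toralMap_mk]
    change ((L^[p] y : EuclideanSpace ℝ (Fin d)) : Torus d) = y
    rw [hy, QuotientAddGroup.mk_add, (QuotientAddGroup.eq_zero_iff m).2 hm, add_zero]
  · calc dist (y : Torus d) x ≤ dist y x := QuotientAddGroup.dist_mk_le y x
      _ = dist x y := dist_comm y x
      _ ≤ dist (x + m) (L^[p] x) / c := by rw [hc]; exact hxy
      _ < r / c := by gcongr; exact hxm

/-- **Closing lemma for expanding linear toral endomorphisms.**  Let A be a d×d integer
matrix, invertible over ℝ, whose inverse has operator norm `‖A⁻¹‖ < 1` (with respect to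
the Euclidean norm), and let `c = 1 - ‖A⁻¹‖`.  If a point z of the torus T^d satisfies
`d(z, f_A^p z) < r` for some integer p ≥ 1 and some r > 0, then there exists a periodic
point y with `f_A^p y = y` and `d(y, z) < r/c`. -/
theorem statement4 (d : ℕ) (A : Matrix (Fin d) (Fin d) ℤ)
    (hdet : (A.map (Int.cast : ℤ → ℝ)).det ≠ 0)
    (hnorm : ‖matCLM ((A.map (Int.cast : ℤ → ℝ))⁻¹)‖ < 1)
    (c : ℝ) (hc : c = 1 - ‖matCLM ((A.map (Int.cast : ℤ → ℝ))⁻¹)‖)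
    (z : Torus d) (p : ℕ) (hp : 1 ≤ p) (r : ℝ) (hr : 0 < r)
    (hclose : dist z ((toralMap A)^[p] z) < r) :
    ∃ y : Torus d, (toralMap A)^[p] y = y ∧ dist y z < r / c :=
  statement4_general d A hdet hnorm c hc z p hp r hclose

end
end
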